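/- arXiv:0903.1373 — 3 statements merged into one kernel-verified Lean document; each statement's English description precedes it below -/
import Mathlib

section
/- Let 0 ≤ k ≤ n and let J : Fin k → Fin n be strictly monotone, with Jᶜ : Fin (n-k) → Fin n the unique strictly monotone map whose range is the complement of the range of J. Then the permutation ⟨Jᶜ,⃖J⟩ of Fin n (listing the values of Jᶜ in order followed by the values of J in reverse order) has sign (-1)^{n·k + ∑_{t} ((J t : ℕ) + 1)}. -/
/-- The permutation of `Fin n` that lists the values of `α : Fin a → Fin n` in order,
followed by the values of `β : Fin b → Fin n` in reverse order. -/
noncomputable def listPerm {n a b : ℕ} (hab : a + b = n) (α : Fin a → Fin n) (β : Fin b → Fin n)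
    (hα : Function.Injective α) (hβ : Function.Injective β)
    (hd : ∀ s t, α s ≠ β t) : Equiv.Perm (Fin n) :=
  Equiv.ofBijective
    ((Sum.elim α (β ∘ Fin.rev)) ∘ (finSumFinEquiv.symm ∘ Fin.cast hab.symm))
    (by
      have hinj : Function.Injective (Sum.elim α (β ∘ Fin.rev)) :=
        Function.Injective.sumElim hα (hβ.comp Fin.rev_injective)
          (fun s t => hd s (Fin.rev t))
      exact Finite.injective_iff_bijective.mp
        (hinj.comp (finSumFinEquiv.symm.injective.comp (Fin.cast_injective _))))

/-- The unique strictly monotone map `Fin (n-k) → Fin n` whose range is the complement of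
the range of an injective map `J : Fin k → Fin n`. -/
noncomputable def monoCompl {n k : ℕ} (J : Fin k → Fin n) (hJ : Function.Injective J) :
    Fin (n - k) → Fin n :=
  (Finset.univ.image J)ᶜ.orderEmbOfFin (by
    rw [Finset.card_compl, Finset.card_image_of_injective _ hJ, Finset.card_univ,
      Fintype.card_fin, Fintype.card_fin])

theorem monoCompl_injective {n k : ℕ} (J : Fin k → Fin n) (hJ : Function.Injective J) :
    Function.Injective (monoCompl J hJ) :=
  ((Finset.univ.image J)ᶜ.orderEmbOfFin _).injective

theorem monoCompl_ne {n k : ℕ} (J : Fin k → Fin n) (hJ : Function.Injective J) :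
    ∀ s t, monoCompl J hJ s ≠ J t := by
  intro s t h
  have hmem : monoCompl J hJ s ∈ (Finset.univ.image J)ᶜ := Finset.orderEmbOfFin_mem _ _ _
  rw [Finset.mem_compl] at hmem
  exact hmem (h ▸ Finset.mem_image_of_mem J (Finset.mem_univ t))

/-!
Write `sign σ = ∏ⱼ (-1)^#{i < j | σ j < σ i}`. In the list `Jᶜ, J (k-1), …, J 0` an entry of
`Jᶜ` is preceded only by smaller values, whereas `J t` is preceded by every larger value, i.e. by
`n - 1 - J t` of them. Since `n - 1 - J t ≡ n + (J t + 1) (mod 2)`, the sign is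
`(-1)^(n k + ∑ₜ (J t + 1))`.
-/

open Finset

namespace Equiv.Perm

variable {n : ℕ}

theorem sign_eq_prod_neg_one_pow_card (σ : Perm (Fin n)) :
    sign σ = ∏ j, (-1) ^ #{i ∈ Iio j | σ j < σ i} := by
  rw [sign_eq_prod_prod_Iio]
  refine prod_congr rfl fun j _ => ?_
  rw [prod_ite, prod_const_one, one_mul, prod_const]
  congr 2
  ext i
  simp only [mem_filter, mem_Iio, not_lt, and_congr_right_iff]
  exact fun hij => (σ.injective.ne hij.ne').le_iff_lt

theorem card_inversions_eq_zero (σ : Perm (Fin n)) {j : Fin n} (h : ∀ i < j, σ i < σ j) :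
    #{i ∈ Iio j | σ j < σ i} = 0 :=
  card_eq_zero.mpr <| filter_eq_empty_iff.mpr fun i hi => (h i (mem_Iio.mp hi)).not_gt

theorem card_inversions_eq (σ : Perm (Fin n)) {j : Fin n} (h : ∀ i, σ j < σ i → i < j) :
    #{i ∈ Iio j | σ j < σ i} = n - 1 - σ j := by
  rw [← Fin.card_Ioi]
  refine card_equiv σ fun i => ?_
  simp only [mem_filter, mem_Iio, mem_Ioi]
  exact ⟨And.right, fun hi => ⟨h i hi, hi⟩⟩

end Equiv.Perm

section listPerm

variable {a b : ℕ} {α : Fin a → Fin (a + b)} {β : Fin b → Fin (a + b)}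
  (hα : Function.Injective α) (hβ : Function.Injective β) (hd : ∀ s t, α s ≠ β t)

@[simp]
theorem listPerm_castAdd (i : Fin a) : listPerm rfl α β hα hβ hd (Fin.castAdd b i) = α i := by
  simp [listPerm]

@[simp]
theorem listPerm_natAdd (i : Fin b) : listPerm rfl α β hα hβ hd (Fin.natAdd a i) = β i.rev := by
  simp [listPerm]

end listPerm

theorem sign_listPerm {n a b : ℕ} (hab : a + b = n) {α : Fin a → Fin n} {β : Fin b → Fin n}
    (hα : StrictMono α) (hβ : StrictMono β) (hd : ∀ s t, α s ≠ β t) :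
    Equiv.Perm.sign (listPerm hab α β hα.injective hβ.injective hd) =
      ∏ t, (-1) ^ (n - 1 - β t) := by
  subst hab
  set σ := listPerm rfl α β hα.injective hβ.injective hd
  have hleft (s : Fin a) : ∀ i < Fin.castAdd b s, σ i < σ (Fin.castAdd b s) := by
    intro i hi
    induction i using Fin.addCases with
    | left i => simpa [σ] using hα ((Fin.strictMono_castAdd b).lt_iff_lt.mp hi)
    | right i => simp only [Fin.lt_def, Fin.val_natAdd, Fin.val_castAdd] at hi; omega
  have hright (s : Fin b) : ∀ i, σ (Fin.natAdd a s) < σ i → i < Fin.natAdd a s := by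
    intro i hi
    induction i using Fin.addCases with
    | left i => simp only [Fin.lt_def, Fin.val_castAdd, Fin.val_natAdd]; omega
    | right i =>
      simp only [σ, listPerm_natAdd] at hi
      exact (Fin.natAdd_lt_natAdd_iff a).mpr (Fin.rev_lt_rev.mp (hβ.lt_iff_lt.mp hi))
  rw [Equiv.Perm.sign_eq_prod_neg_one_pow_card, Fin.prod_univ_add]
  simp only [σ.card_inversions_eq_zero (hleft _), σ.card_inversions_eq (hright _), pow_zero,
    prod_const_one, one_mul]
  simp only [σ, listPerm_natAdd]
  exact Fintype.prod_equiv Fin.revPerm _ _ fun _ => rfl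

theorem monoCompl_strictMono {n k : ℕ} (J : Fin k → Fin n) (hJ : Function.Injective J) :
    StrictMono (monoCompl J hJ) :=
  ((univ.image J)ᶜ.orderEmbOfFin _).strictMono

theorem Int.units_pow_sub_one_sub (u : ℤˣ) {n v : ℕ} (hv : v < n) :
    u ^ (n - 1 - v) = u ^ (n + (v + 1)) := by
  rw [Int.units_pow_eq_pow_mod_two, Int.units_pow_eq_pow_mod_two _ (n + _)]
  congr 1
  omega

theorem sign_monoCompl_rev_perm {n k : ℕ} (hk : k ≤ n) (J : Fin k → Fin n) (hJ : StrictMono J) :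
    Equiv.Perm.sign
      (listPerm (Nat.sub_add_cancel hk) (monoCompl J hJ.injective) J
        (monoCompl_injective J hJ.injective) hJ.injective (monoCompl_ne J hJ.injective)) =
    (-1) ^ (n * k + ∑ t, ((J t : ℕ) + 1)) := by
  rw [sign_listPerm _ (monoCompl_strictMono J hJ.injective) hJ]
  simp_rw [Int.units_pow_sub_one_sub _ (J _).isLt]
  rw [prod_pow_eq_pow_sum, sum_add_distrib, sum_const, card_univ, Fintype.card_fin, smul_eq_mul,
    mul_comm]
end

section
/- Let 0 ≤ k ≤ n, let α : Fin k → Fin n be injective, let τ be a permutation of Fin k, and let β : Fin (n-k) → Fin n be any injective map whose range is the complement of the range of α. Then sign⟨α,⃖β⟩ · sign⟨β,⃖(α∘τ)⟩ = (-1)^⌊n/2⌋ · sign τ; in particular this product is independent of the choice of β. -/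
/-! Put `P = ⟨α,⃖β⟩`. Read backwards, `⟨β,⃖(α∘τ)⟩` lists `α ∘ τ` and then `β` reversed, so
`⟨β,⃖(α∘τ)⟩ = P * τ' * rev`, where `τ'` is `τ` acting on the first `k` positions and `rev`
reverses `Fin n`. As `sign P ^ 2 = 1`, the product of the two signs is `sign τ * sign rev`, and
`sign rev = (-1) ^ ⌊n/2⌋` by induction on `n`: the reversal of `Fin (n + 1)` is that of `Fin n`
followed by a rotation of all `n + 1` points, of sign `(-1) ^ n`. -/

theorem Equiv.Perm.sign_viaFintypeEmbedding {α β : Type*} [Fintype α] [DecidableEq α]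
    [Fintype β] [DecidableEq β] (e : Equiv.Perm α) (f : α ↪ β) :
    Equiv.Perm.sign (e.viaFintypeEmbedding f) = Equiv.Perm.sign e :=
  Equiv.Perm.sign_extendDomain e _

theorem Fin.revPerm_succ_eq_finRotate_mul (n : ℕ) :
    (Fin.revPerm : Equiv.Perm (Fin (n + 1))) =
      finRotate (n + 1) * (Fin.revPerm : Equiv.Perm (Fin n)).viaFintypeEmbedding castSuccEmb := by
  ext x
  induction x using Fin.lastCases with
  | last =>
    rw [Equiv.Perm.mul_apply, Equiv.Perm.viaFintypeEmbedding_apply_notMem_range]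
    · simp
    · simp [Fin.range_castSucc]
  | cast i =>
    rw [Equiv.Perm.mul_apply, ← Fin.coe_castSuccEmb, Equiv.Perm.viaFintypeEmbedding_apply_image]
    simp [Fin.rev_castSucc]

theorem Fin.sign_revPerm (n : ℕ) :
    Equiv.Perm.sign (Fin.revPerm : Equiv.Perm (Fin n)) = (-1) ^ (n / 2) := by
  induction n with
  | zero => rfl
  | succ n ih =>
    rw [Fin.revPerm_succ_eq_finRotate_mul, map_mul, sign_finRotate,
      Equiv.Perm.sign_viaFintypeEmbedding, ih, ← pow_add, Int.units_pow_eq_pow_mod_two,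
      Int.units_pow_eq_pow_mod_two _ ((n + 1) / 2)]
    congr 1
    rcases Nat.even_or_odd' n with ⟨q, rfl | rfl⟩ <;> omega

section listPerm

variable {n a b : ℕ} (hab : a + b = n) {α : Fin a → Fin n} {β : Fin b → Fin n}
  (hα : Function.Injective α) (hβ : Function.Injective β) (hd : ∀ s t, α s ≠ β t)

theorem listPerm_apply_of_lt {x : Fin n} (hx : (x : ℕ) < a) :
    listPerm hab α β hα hβ hd x = α ⟨x, hx⟩ := by
  show Sum.elim α (β ∘ Fin.rev) (finSumFinEquiv.symm (Fin.cast hab.symm x)) = _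
  rw [show Fin.cast hab.symm x = Fin.castAdd b ⟨x, hx⟩ from rfl,
    finSumFinEquiv_symm_apply_castAdd, Sum.elim_inl]

theorem listPerm_apply_of_le {x : Fin n} (hx : a ≤ (x : ℕ)) :
    listPerm hab α β hα hβ hd x = β ⟨n - 1 - x, by omega⟩ := by
  show Sum.elim α (β ∘ Fin.rev) (finSumFinEquiv.symm (Fin.cast hab.symm x)) = _
  rw [show Fin.cast hab.symm x = Fin.natAdd a ⟨x - a, by omega⟩ from
      Fin.ext (by simp only [Fin.val_cast, Fin.natAdd_mk]; omega),
    finSumFinEquiv_symm_apply_natAdd, Sum.elim_inr, Function.comp_apply]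
  congr 1
  ext
  simp only [Fin.val_rev]
  omega

theorem listPerm_comp_eq_mul (hba : b + a = n) (τ : Equiv.Perm (Fin a))
    (hd' : ∀ s t, β s ≠ (α ∘ τ) t) :
    listPerm hba β (α ∘ τ) hβ (hα.comp τ.injective) hd' =
      listPerm hab α β hα hβ hd *
        (τ.viaFintypeEmbedding (Fin.castLEEmb (by omega)) * Fin.revPerm) := by
  refine Equiv.ext fun x => ?_
  have hrev : (Fin.rev x : ℕ) = n - 1 - x := by rw [Fin.val_rev]; omega
  rw [Equiv.Perm.mul_apply, Equiv.Perm.mul_apply, Fin.revPerm_apply]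
  by_cases hx : (x : ℕ) < b
  · rw [listPerm_apply_of_lt _ _ _ _ hx, Equiv.Perm.viaFintypeEmbedding_apply_notMem_range,
      listPerm_apply_of_le _ _ _ _ (x := Fin.rev x) (by omega)]
    · exact congrArg β (Fin.ext (by simp only [hrev]; omega))
    · simp only [Fin.coe_castLEEmb, Fin.range_castLE, Set.mem_ofPred_eq, not_lt, hrev]
      omega
  · rw [show Fin.rev x = Fin.castLEEmb (show a ≤ n by omega) ⟨n - 1 - x, by omega⟩ from
        Fin.ext hrev, Equiv.Perm.viaFintypeEmbedding_apply_image,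
      listPerm_apply_of_le _ _ _ _ (x := x) (by omega), Fin.castLEEmb_apply]
    exact (listPerm_apply_of_lt hab hα hβ hd (x := Fin.castLE _ (τ _)) (τ _).is_lt).symm

theorem sign_listPerm_mul_sign_listPerm_comp (hba : b + a = n) (τ : Equiv.Perm (Fin a))
    (hd' : ∀ s t, β s ≠ (α ∘ τ) t) :
    Equiv.Perm.sign (listPerm hab α β hα hβ hd) *
      Equiv.Perm.sign (listPerm hba β (α ∘ τ) hβ (hα.comp τ.injective) hd') =
      (-1) ^ (n / 2) * Equiv.Perm.sign τ := by
  rw [listPerm_comp_eq_mul hab hα hβ hd, map_mul, map_mul, Equiv.Perm.sign_viaFintypeEmbedding,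
    Fin.sign_revPerm, ← mul_assoc, Int.units_mul_self, one_mul, mul_comm]

end listPerm

theorem sign_listPerm_mul_sign_listPerm {n k : ℕ} (hk : k ≤ n)
    (α : Fin k → Fin n) (hα : Function.Injective α) (τ : Equiv.Perm (Fin k))
    (β : Fin (n - k) → Fin n) (hβ : Function.Injective β)
    (hrange : Set.range β = (Set.range α)ᶜ) :
    Equiv.Perm.sign (listPerm (Nat.add_sub_cancel' hk) α β hα hβ
        (fun s t hst => (hrange ▸ Set.mem_range_self t : β t ∈ (Set.range α)ᶜ) ⟨s, hst⟩)) *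
    Equiv.Perm.sign (listPerm (Nat.sub_add_cancel hk) β (α ∘ τ) hβ (hα.comp τ.injective)
        (fun s t hst => (hrange ▸ Set.mem_range_self s : β s ∈ (Set.range α)ᶜ) ⟨τ t, hst.symm⟩)) =
    (-1) ^ (n / 2) * Equiv.Perm.sign τ :=
  sign_listPerm_mul_sign_listPerm_comp _ _ _ _ _ _ _
end

section
/- Desnanot–Jacobi identity (Dodgson condensation): let F be a field and A an invertible (n+2)×(n+2) matrix over F. Then det A · det (int A) = det (A with row 0 and column 0 deleted) · det (A with the last row and the last column deleted) - det (A with row 0 and the last column deleted) · det (A with the last row and column 0 deleted), where int A is the n×n interior submatrix of A obtained by deleting the first and last rows and the first and last columns. -/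
/-!
Replacing the `m`-columns of the identity by the corresponding columns of `adj A` gives a matrix
`C` with `A * C` block triangular, with diagonal blocks `det A • 1` and `A_kk`. Taking determinants
yields Jacobi's complementary minor identity `det A * det (adj A)_mm = (det A) ^ |m| * det A_kk`.
For `m = {0, n + 1}` the `2 × 2` minor of `adj A` is, by the cofactor formula, the Dodgson
combination of the four `(n + 1)`-minors, and `det A` cancels.
-/

open Matrix

theorem det_mul_det_adjugate_toBlocks₁₁ {m k R : Type*} [Fintype m] [Fintype k] [DecidableEq m]
    [DecidableEq k] [CommRing R] (A : Matrix (m ⊕ k) (m ⊕ k) R) :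
    A.det * A.adjugate.toBlocks₁₁.det = A.det ^ Fintype.card m * A.toBlocks₂₂.det := by
  set X := A.adjugate
  have hAX : A * X = A.det • 1 := mul_adjugate A
  conv_lhs at hAX => rw [← fromBlocks_toBlocks A, ← fromBlocks_toBlocks X, fromBlocks_multiply]
  rw [← fromBlocks_one, fromBlocks_smul, fromBlocks_inj] at hAX
  obtain ⟨h₁₁, -, h₂₁, -⟩ := hAX
  have hAC : A * fromBlocks X.toBlocks₁₁ 0 X.toBlocks₂₁ 1 =
      fromBlocks (A.det • 1) A.toBlocks₁₂ 0 A.toBlocks₂₂ := by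
    conv_lhs => rw [← fromBlocks_toBlocks A]
    rw [fromBlocks_multiply, h₁₁, h₂₁, smul_zero]
    simp
  calc A.det * X.toBlocks₁₁.det = (A * fromBlocks X.toBlocks₁₁ 0 X.toBlocks₂₁ 1).det := by
        rw [det_mul, det_fromBlocks_zero₁₂, det_one, mul_one]
    _ = A.det ^ Fintype.card m * A.toBlocks₂₂.det := by
        rw [hAC, det_fromBlocks_zero₂₁, det_smul, det_one, mul_one]

noncomputable def Fin.endsSumInteriorEquiv (n : ℕ) : Fin 2 ⊕ Fin n ≃ Fin (n + 2) :=
  Equiv.ofBijective (Sum.elim ![0, Fin.last (n + 1)] fun t => t.succ.castSucc) <|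
    (Fintype.bijective_iff_injective_and_card _).2 ⟨by
      rintro (a | a) (b | b) h
      · fin_cases a <;> fin_cases b <;> simp_all [Fin.ext_iff]
      · fin_cases a <;> simp [Fin.ext_iff] at h; omega
      · fin_cases b <;> simp [Fin.ext_iff] at h; omega
      · simpa [Fin.ext_iff] using h, by simp [add_comm]⟩

theorem det_adjugate_corners {R : Type*} [CommRing R] {n : ℕ}
    (A : Matrix (Fin (n + 2)) (Fin (n + 2)) R) :
    (A.adjugate.submatrix (Fin.endsSumInteriorEquiv n)
        (Fin.endsSumInteriorEquiv n)).toBlocks₁₁.det =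
      (A.submatrix (Fin.succAbove 0) (Fin.succAbove 0)).det *
        (A.submatrix (Fin.succAbove (Fin.last (n + 1))) (Fin.succAbove (Fin.last (n + 1)))).det -
      (A.submatrix (Fin.succAbove 0) (Fin.succAbove (Fin.last (n + 1)))).det *
        (A.submatrix (Fin.succAbove (Fin.last (n + 1))) (Fin.succAbove 0)).det := by
  simp [det_fin_two, toBlocks₁₁, Fin.endsSumInteriorEquiv, adjugate_fin_succ_eq_det_submatrix,
    mul_mul_mul_comm _ _ ((-1 : R) ^ (n + 1)), ← pow_add, mul_comm]

theorem desnanot_jacobi {F : Type*} [Field F] {n : ℕ}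
    (A : Matrix (Fin (n + 2)) (Fin (n + 2)) F) (hA : IsUnit A.det) :
    A.det * (A.submatrix (fun t : Fin n => (t.succ.castSucc : Fin (n + 2)))
        (fun t : Fin n => (t.succ.castSucc : Fin (n + 2)))).det =
      (A.submatrix (Fin.succAbove 0) (Fin.succAbove 0)).det *
        (A.submatrix (Fin.succAbove (Fin.last (n + 1))) (Fin.succAbove (Fin.last (n + 1)))).det -
      (A.submatrix (Fin.succAbove 0) (Fin.succAbove (Fin.last (n + 1)))).det *
        (A.submatrix (Fin.succAbove (Fin.last (n + 1))) (Fin.succAbove 0)).det := by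
  set e := Fin.endsSumInteriorEquiv n
  have jacobi := det_mul_det_adjugate_toBlocks₁₁ (A.submatrix e e)
  rw [adjugate_submatrix_equiv_self, det_submatrix_equiv_self, Fintype.card_fin, sq, mul_assoc,
    det_adjugate_corners] at jacobi
  -- `(A.submatrix e e).toBlocks₂₂` is the interior of `A` by definition.
  exact (hA.mul_left_cancel jacobi).symm
end
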